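/- arXiv:1903.06618 — 6 statements merged into one kernel-verified Lean document; each statement's English description precedes it below -/
import Mathlib

section
/- (Forward direction of Theorem 5.1, quantum spectral curve characterization.) Assume η ≠ 0, k1 ≠ 0, k2 ≠ 0, k1 ≠ k2 and the genericity condition. Suppose t, Q ∈ ℂ[X] satisfy the quantum spectral curve equation, where Q is monic of degree at most N_s and Q(ζ_{n,d_n}) ≠ 0 for every n ∈ {1,…,N}. Then t has degree at most N, the coefficient of X^N in t equals k1 + k2, and det D_{t,n} = 0 for every n ∈ {1,…,N}. -/
open Polynomial Finset

noncomputable section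

/-- The shifted inhomogeneity points `ζ_{n,k} = ξ_n + (d_n − 1)η/2 − k·η`. -/
def zeta {N : ℕ} (d : Fin N → ℕ) (ξ : Fin N → ℂ) (η : ℂ) (n : Fin N) (k : ℕ) : ℂ :=
  ξ n + ((d n : ℂ) - 1) * η / 2 - (k : ℂ) * η

/-- `a(X) = ∏ₙ (X − ζ_{n,dₙ})`. -/
def apol {N : ℕ} (d : Fin N → ℕ) (ξ : Fin N → ℂ) (η : ℂ) : Polynomial ℂ :=
  ∏ n : Fin N, (X - C (zeta d ξ η n (d n)))

/-- `d(X) = ∏ₙ (X − ζ_{n,0})`. -/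
def dpol {N : ℕ} (d : Fin N → ℕ) (ξ : Fin N → ℂ) (η : ℂ) : Polynomial ℂ :=
  ∏ n : Fin N, (X - C (zeta d ξ η n 0))

/-- The tridiagonal matrix `D_{t,n}`. -/
def Dmat {N : ℕ} (d : Fin N → ℕ) (ξ : Fin N → ℂ) (η k1 k2 : ℂ) (t : Polynomial ℂ)
    (n : Fin N) : Matrix (Fin (d n + 1)) (Fin (d n + 1)) ℂ :=
  Matrix.of fun h j =>
    if (j : ℕ) = (h : ℕ) then t.eval (zeta d ξ η n h)
    else if (j : ℕ) = (h : ℕ) + 1 then -k1 * (apol d ξ η).eval (zeta d ξ η n h)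
    else if (h : ℕ) = (j : ℕ) + 1 then -k2 * (dpol d ξ η).eval (zeta d ξ η n h)
    else 0

/-! Comparing the coefficients of `X ^ (N + deg Q)` in the Baxter equation gives the degree and
top coefficient of `t`, because `a`, `d` and `Q(X ± η)` are monic. Evaluated along the string
`ζ_{n,0}, …, ζ_{n,dₙ}`, a lattice of step `-η`, the Baxter equation becomes a three-term
recurrence for `Q(ζ_{n,h})` whose boundary terms drop out since `d(ζ_{n,0}) = a(ζ_{n,dₙ}) = 0`;
it says that `(Q(ζ_{n,h}))ₕ` is a kernel vector of `D_{t,n}`, nonzero in its last entry. -/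

section Baxter

open Matrix

variable {R : Type*} [CommRing R]

lemma isMonicOfDegree_prod_X_sub_C [Nontrivial R] {ι : Type*} (s : Finset ι) (f : ι → R) :
    IsMonicOfDegree (∏ i ∈ s, (X - C (f i))) s.card :=
  ⟨natDegree_finsetProd_X_sub_C_eq_card s f, monic_prod_of_monic _ _ fun _ _ => monic_X_sub_C _⟩

lemma eval_prod_X_sub_C_of_mem {ι : Type*} {s : Finset ι} (f : ι → R) {i : ι} (hi : i ∈ s) :
    (∏ j ∈ s, (X - C (f j))).eval (f i) = 0 := by
  simp only [eval_prod, eval_sub, eval_X, eval_C]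
  exact prod_eq_zero hi (sub_self _)

lemma natDegree_le_and_coeff_of_mul_monic_eq {t Q p : R[X]} {n : ℕ} (hQ : Q.Monic)
    (htQ : t * Q = p) (hp : p.natDegree ≤ n + Q.natDegree) :
    t.natDegree ≤ n ∧ t.coeff n = p.coeff (n + Q.natDegree) := by
  have htn : t.natDegree ≤ n := by
    rcases eq_or_ne t 0 with rfl | ht
    · simp
    have := hQ.natDegree_mul' ht
    rw [mul_comm, htQ] at this
    omega
  refine ⟨htn, ?_⟩
  rw [← htQ, coeff_mul_add_eq_of_natDegree_le htn le_rfl, hQ.coeff_natDegree, mul_one]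

lemma natDegree_le_and_coeff_C_mul_add_C_mul {p q : R[X]} {n : ℕ} (hp : IsMonicOfDegree p n)
    (hq : IsMonicOfDegree q n) (k₁ k₂ : R) :
    (C k₁ * p + C k₂ * q).natDegree ≤ n ∧ (C k₁ * p + C k₂ * q).coeff n = k₁ + k₂ := by
  refine ⟨natDegree_add_le_of_degree_le ((natDegree_C_mul_le _ _).trans hp.natDegree_eq.le)
    ((natDegree_C_mul_le _ _).trans hq.natDegree_eq.le), ?_⟩
  rw [coeff_add, coeff_C_mul, coeff_C_mul, ← hp.natDegree_eq, hp.monic.coeff_natDegree,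
    hp.natDegree_eq, ← hq.natDegree_eq, hq.monic.coeff_natDegree, mul_one, mul_one]

theorem natDegree_le_and_coeff_of_baxter {a b t Q : R[X]} {k₁ k₂ η : R} {m : ℕ}
    (ha : IsMonicOfDegree a m) (hb : IsMonicOfDegree b m) (hQ : Q.Monic)
    (hTQ : t * Q = C k₁ * a * Q.comp (X - C η) + C k₂ * b * Q.comp (X + C η)) :
    t.natDegree ≤ m ∧ t.coeff m = k₁ + k₂ := by
  nontriviality R
  have hQdeg : IsMonicOfDegree Q Q.natDegree := ⟨rfl, hQ⟩
  have hminus : IsMonicOfDegree (a * Q.comp (X - C η)) (m + Q.natDegree) :=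
    ha.mul (by simpa using hQdeg.comp one_ne_zero (isMonicOfDegree_X_sub_one η))
  have hplus : IsMonicOfDegree (b * Q.comp (X + C η)) (m + Q.natDegree) :=
    hb.mul (by simpa using hQdeg.comp one_ne_zero (isMonicOfDegree_X_add_one η))
  rw [mul_assoc, mul_assoc] at hTQ
  obtain ⟨hdeg, hcoeff⟩ := natDegree_le_and_coeff_C_mul_add_C_mul hminus hplus k₁ k₂
  rw [← hcoeff]
  exact natDegree_le_and_coeff_of_mul_monic_eq hQ hTQ hdeg

def tridiagonal (m : ℕ) (α β γ : ℕ → R) : Matrix (Fin (m + 1)) (Fin (m + 1)) R :=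
  Matrix.of fun h j =>
    if (j : ℕ) = h then α h else if (j : ℕ) = h + 1 then β h else if (h : ℕ) = j + 1 then γ h
    else 0

-- At `h = 0` the truncated `v (h - 1)` is harmless: it is multiplied by `γ 0 = 0`.
lemma tridiagonal_mulVec_apply {m : ℕ} {α β γ : ℕ → R} (hβ : β m = 0) (hγ : γ 0 = 0)
    (v : ℕ → R) (h : Fin (m + 1)) :
    (tridiagonal m α β γ *ᵥ fun j => v j) h = α h * v h + β h * v (h + 1) + γ h * v (h - 1) := by
  have hrow : ∀ j : ℕ, (if j = h then α h else if j = h + 1 then β h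
      else if (h : ℕ) = j + 1 then γ h else 0) * v j =
      (if j = h then α h * v h else 0) + (if j = h + 1 then β h * v (h + 1) else 0) +
        (if j = (h : ℕ) - 1 then (if 0 < (h : ℕ) then γ h * v (h - 1) else 0) else 0) := by
    intro j
    split_ifs <;> first | omega | (subst_vars; simp)
  simp only [mulVec, dotProduct, tridiagonal, Matrix.of_apply]
  rw [Fin.sum_univ_eq_sum_range (fun j => (if j = h then α h else if j = h + 1 then β h
      else if (h : ℕ) = j + 1 then γ h else 0) * v j), Finset.sum_congr rfl fun j _ => hrow j,
    sum_add_distrib, sum_add_distrib, sum_ite_eq', sum_ite_eq', sum_ite_eq']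
  have hsuper : (if (h : ℕ) + 1 ∈ range (m + 1) then β h * v (h + 1) else 0) =
      β h * v (h + 1) := by
    split_ifs with hh
    · rfl
    · rw [show (h : ℕ) = m by simp only [mem_range] at hh; omega, hβ, zero_mul]
  have hsub : (if (h : ℕ) - 1 ∈ range (m + 1) then
      (if 0 < (h : ℕ) then γ h * v (h - 1) else 0) else 0) = γ h * v (h - 1) := by
    rw [if_pos (by simp only [mem_range]; omega)]
    split_ifs with hh
    · rfl
    · rw [show (h : ℕ) = 0 by omega, hγ, zero_mul]
  rw [if_pos (mem_range.mpr h.isLt), hsuper, hsub]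

theorem det_tridiagonal_eq_zero [IsDomain R] {m : ℕ} {α β γ : ℕ → R} (hβ : β m = 0)
    (hγ : γ 0 = 0) {v : ℕ → R} (hrec : ∀ h ≤ m, α h * v h + β h * v (h + 1) + γ h * v (h - 1) = 0)
    (hv : v m ≠ 0) : (tridiagonal m α β γ).det = 0 := by
  refine exists_mulVec_eq_zero_iff.mp ⟨fun j => v j, fun h0 => hv ?_, funext fun h => ?_⟩
  · simpa using congrFun h0 (Fin.last m)
  · rw [tridiagonal_mulVec_apply hβ hγ, hrec h (Fin.is_le h), Pi.zero_apply]

theorem det_tridiagonal_baxter_eq_zero [IsDomain R] {a b t Q : R[X]} {k₁ k₂ η : R}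
    (hTQ : t * Q = C k₁ * a * Q.comp (X - C η) + C k₂ * b * Q.comp (X + C η))
    {ζ : ℕ → R} (hζ : ∀ h, ζ (h + 1) = ζ h - η) {m : ℕ} (ha : a.eval (ζ m) = 0)
    (hb : b.eval (ζ 0) = 0) (hQ : Q.eval (ζ m) ≠ 0) :
    (tridiagonal m (fun h => t.eval (ζ h)) (fun h => -k₁ * a.eval (ζ h))
      (fun h => -k₂ * b.eval (ζ h))).det = 0 := by
  have hTQ_at (x : R) : t.eval x * Q.eval x =
      k₁ * a.eval x * Q.eval (x - η) + k₂ * b.eval x * Q.eval (x + η) := by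
    simpa [eval_comp] using congrArg (eval x) hTQ
  refine det_tridiagonal_eq_zero (v := fun h => Q.eval (ζ h)) (by simp [ha]) (by simp [hb])
    (fun h _ => ?_) hQ
  rcases h with _ | h
  · rw [hζ 0, Nat.zero_sub]
    linear_combination hTQ_at (ζ 0) + k₂ * (Q.eval (ζ 0 + η) - Q.eval (ζ 0)) * hb
  · rw [hζ (h + 1), Nat.add_sub_cancel, show ζ h = ζ (h + 1) + η by rw [hζ]; ring]
    linear_combination hTQ_at (ζ (h + 1))

end Baxter

lemma zeta_succ {N : ℕ} (d : Fin N → ℕ) (ξ : Fin N → ℂ) (η : ℂ) (n : Fin N) (k : ℕ) :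
    zeta d ξ η n (k + 1) = zeta d ξ η n k - η := by
  unfold zeta; push_cast; ring

lemma Dmat_eq_tridiagonal {N : ℕ} (d : Fin N → ℕ) (ξ : Fin N → ℂ) (η k1 k2 : ℂ) (t : ℂ[X])
    (n : Fin N) :
    Dmat d ξ η k1 k2 t n = tridiagonal (d n) (fun h => t.eval (zeta d ξ η n h))
      (fun h => -k1 * (apol d ξ η).eval (zeta d ξ η n h))
      (fun h => -k2 * (dpol d ξ η).eval (zeta d ξ η n h)) :=
  rfl

theorem statement0_general {N : ℕ} (d : Fin N → ℕ)
    (ξ : Fin N → ℂ) (η k1 k2 : ℂ)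
    (t Q : Polynomial ℂ)
    (hTQ : t * Q = C k1 * apol d ξ η * Q.comp (X - C η)
      + C k2 * dpol d ξ η * Q.comp (X + C η))
    (hQmonic : Q.Monic)
    (hQnz : ∀ n : Fin N, Q.eval (zeta d ξ η n (d n)) ≠ 0) :
    t.natDegree ≤ N ∧ t.coeff N = k1 + k2 ∧
      ∀ n : Fin N, (Dmat d ξ η k1 k2 t n).det = 0 := by
  have hapol : IsMonicOfDegree (apol d ξ η) N := by
    simpa [apol] using isMonicOfDegree_prod_X_sub_C univ fun n => zeta d ξ η n (d n)
  have hdpol : IsMonicOfDegree (dpol d ξ η) N := by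
    simpa [dpol] using isMonicOfDegree_prod_X_sub_C univ fun n => zeta d ξ η n 0
  obtain ⟨hdeg, hcoeff⟩ := natDegree_le_and_coeff_of_baxter hapol hdpol hQmonic hTQ
  refine ⟨hdeg, hcoeff, fun n => ?_⟩
  rw [Dmat_eq_tridiagonal]
  exact det_tridiagonal_baxter_eq_zero hTQ (zeta_succ d ξ η n)
    (eval_prod_X_sub_C_of_mem (fun m => zeta d ξ η m (d m)) (mem_univ n))
    (eval_prod_X_sub_C_of_mem (fun m => zeta d ξ η m 0) (mem_univ n)) (hQnz n)

/-- Forward direction of Theorem 5.1 (quantum spectral curve ⇒ discrete characterization). -/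
theorem statement0 {N : ℕ} (hN : 1 ≤ N) (d : Fin N → ℕ) (hd : ∀ n, 1 ≤ d n)
    (ξ : Fin N → ℂ) (η k1 k2 : ℂ)
    (hη : η ≠ 0) (hk1 : k1 ≠ 0) (hk2 : k2 ≠ 0) (hk12 : k1 ≠ k2)
    (hgen : ∀ n m : Fin N, ∀ k j : ℕ, k ≤ d n → j ≤ d m →
      zeta d ξ η n k = zeta d ξ η m j → n = m ∧ k = j)
    (t Q : Polynomial ℂ)
    (hTQ : t * Q = C k1 * apol d ξ η * Q.comp (X - C η)
      + C k2 * dpol d ξ η * Q.comp (X + C η))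
    (hQmonic : Q.Monic) (hQdeg : Q.natDegree ≤ ∑ n, d n)
    (hQnz : ∀ n : Fin N, Q.eval (zeta d ξ η n (d n)) ≠ 0) :
    t.natDegree ≤ N ∧ t.coeff N = k1 + k2 ∧
      ∀ n : Fin N, (Dmat d ξ η k1 k2 t n).det = 0 :=
  statement0_general d ξ η k1 k2 t Q hTQ hQmonic hQnz
end
end

section
/- (Uniqueness of the polynomial Q-solution, from the quantum Wronskian argument in Theorem 5.1.) Assume η ≠ 0, k1 ≠ 0, k2 ≠ 0, k1 ≠ k2 and the genericity condition. Let t ∈ ℂ[X] be fixed. If P and Q are monic polynomials in ℂ[X] that both satisfy the quantum spectral curve equation with the same t, then P = Q. -/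
open Polynomial Finset

noncomputable section

/-- The next-to-leading coefficient of a monic polynomial shifts by `deg·η`
under composition with `X + C η`. -/
lemma aux_nextCoeff_comp {p : Polynomial ℂ} (hp : p.Monic) (η : ℂ) :
    (p.comp (X + C η)).nextCoeff = p.nextCoeff + p.natDegree * η := by
  rcases Nat.eq_zero_or_pos p.natDegree with h0 | hpos
  · have : p = 1 := hp.natDegree_eq_zero.mp h0
    simp [this, nextCoeff]
  · have hdeg : (p.comp (X + C η)).natDegree = p.natDegree := by
      simp [natDegree_comp]
    rw [nextCoeff_of_natDegree_pos (by omega : 0 < (p.comp (X + C η)).natDegree),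
        nextCoeff_of_natDegree_pos hpos, hdeg]
    rw [← taylor_apply, taylor_coeff]
    set n := p.natDegree with hn
    have hq1 : (hasseDeriv (n - 1) p).natDegree ≤ 1 := by
      have := natDegree_hasseDeriv_le p (n - 1)
      omega
    rw [eq_X_add_C_of_natDegree_le_one hq1, hasseDeriv_coeff, hasseDeriv_coeff]
    have h1 : 1 + (n - 1) = n := by omega
    have h0' : 0 + (n - 1) = n - 1 := by omega
    have hch : n.choose (n - 1) = n := by
      rw [← Nat.choose_symm (by omega : n - 1 ≤ n)]
      have : n - (n - 1) = 1 := by omega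
      rw [this, Nat.choose_one_right]
    have hcs : (n - 1).choose (n - 1) = 1 := Nat.choose_self _
    have hlc : p.coeff n = 1 := hp.coeff_natDegree
    simp [h1, h0', hch, hcs, hlc]
    ring

/-- If monic `A`, `B` satisfy `A(X+η)B(X) = B(X+η)A(X)` with `η ≠ 0`,
their degrees agree. -/
lemma aux_deg_eq {A B : Polynomial ℂ} {η : ℂ} (hη : η ≠ 0)
    (hA : A.Monic) (hB : B.Monic)
    (h : A.comp (X + C η) * B = B.comp (X + C η) * A) :
    A.natDegree = B.natDegree := by
  have h1 := congrArg nextCoeff h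
  rw [Monic.nextCoeff_mul (hA.comp_X_add_C η) hB,
      Monic.nextCoeff_mul (hB.comp_X_add_C η) hA,
      aux_nextCoeff_comp hA, aux_nextCoeff_comp hB] at h1
  have h2 : (A.natDegree : ℂ) * η = (B.natDegree : ℂ) * η := by linear_combination h1
  have h3 : (A.natDegree : ℂ) = (B.natDegree : ℂ) := mul_right_cancel₀ hη h2
  exact_mod_cast h3

/-- If monic `P`, `Q` satisfy `P(X+η)Q(X) = Q(X+η)P(X)` with `η ≠ 0`, then `P = Q`. -/
lemma aux_eq_of_wronskian {P Q : Polynomial ℂ} {η : ℂ} (hη : η ≠ 0)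
    (hP : P.Monic) (hQ : Q.Monic)
    (h : P.comp (X + C η) * Q = Q.comp (X + C η) * P) : P = Q := by
  have hdeg : P.natDegree = Q.natDegree := aux_deg_eq hη hP hQ h
  by_contra hne
  set D := P - Q with hD
  have hD0 : D ≠ 0 := sub_ne_zero.mpr hne
  have hDQ : D.comp (X + C η) * Q = Q.comp (X + C η) * D := by
    simp only [hD, sub_comp]
    linear_combination h
  set c := D.leadingCoeff with hc
  have hc0 : c ≠ 0 := leadingCoeff_ne_zero.mpr hD0
  set D' := D * C c⁻¹ with hD'
  have hD'monic : D'.Monic := monic_mul_leadingCoeff_inv hD0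
  have hD'Q : D'.comp (X + C η) * Q = Q.comp (X + C η) * D' := by
    simp only [hD', mul_comp, C_comp]
    linear_combination C c⁻¹ * hDQ
  have hdeg2 : D'.natDegree = Q.natDegree := aux_deg_eq hη hD'monic hQ hD'Q
  have hPQd : P.degree = Q.degree := by
    rw [degree_eq_natDegree hP.ne_zero, degree_eq_natDegree hQ.ne_zero, hdeg]
  have hlt : D.degree < P.degree :=
    degree_sub_lt hPQd hP.ne_zero (by rw [hP.leadingCoeff, hQ.leadingCoeff])
  have hD'deg : D'.degree = D.degree := by
    rw [hD', hc]; exact degree_mul_leadingCoeff_inv D hD0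
  have hfin : D'.degree = Q.degree := by
    rw [degree_eq_natDegree hD'monic.ne_zero, degree_eq_natDegree hQ.ne_zero, hdeg2]
  rw [hD'deg, ← hPQd] at hfin
  exact absurd hfin (ne_of_lt hlt)

/-- Uniqueness of the monic polynomial solution of the quantum spectral curve
equation for a fixed `t` (quantum Wronskian argument in Theorem 5.1). -/
theorem statement1 {N : ℕ} (hN : 1 ≤ N) (d : Fin N → ℕ) (hd : ∀ n, 1 ≤ d n)
    (ξ : Fin N → ℂ) (η k1 k2 : ℂ)
    (hη : η ≠ 0) (hk1 : k1 ≠ 0) (hk2 : k2 ≠ 0) (hk12 : k1 ≠ k2)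
    (hgen : ∀ n m : Fin N, ∀ k j : ℕ, k ≤ d n → j ≤ d m →
      zeta d ξ η n k = zeta d ξ η m j → n = m ∧ k = j)
    (t P Q : Polynomial ℂ)
    (hP : t * P = C k1 * apol d ξ η * P.comp (X - C η)
      + C k2 * dpol d ξ η * P.comp (X + C η))
    (hQ : t * Q = C k1 * apol d ξ η * Q.comp (X - C η)
      + C k2 * dpol d ξ η * Q.comp (X + C η))
    (hPmonic : P.Monic) (hQmonic : Q.Monic) :
    P = Q := by
  have hamonic : (apol d ξ η).Monic :=
    monic_prod_of_monic _ _ fun n _ => monic_X_sub_C _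
  have hdmonic : (dpol d ξ η).Monic :=
    monic_prod_of_monic _ _ fun n _ => monic_X_sub_C _
  -- the quantum Wronskian
  set W := P.comp (X + C η) * Q - Q.comp (X + C η) * P with hWdef
  have hshift : ((X : Polynomial ℂ) + C η).comp (X - C η) = X := by
    simp [add_comp]
  have hWc : W.comp (X - C η)
      = P * Q.comp (X - C η) - Q * P.comp (X - C η) := by
    rw [hWdef]
    simp only [sub_comp, mul_comp, comp_assoc, hshift, comp_X]
  have key : C k1 * apol d ξ η * W.comp (X - C η) = C k2 * dpol d ξ η * W := by
    rw [hWc, hWdef]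
    linear_combination Q * hP - P * hQ
  have hW0 : W = 0 := by
    by_contra hW
    have hlc := congrArg leadingCoeff key
    have hXs : ((X : Polynomial ℂ) - C η).natDegree ≠ 0 := by
      rw [natDegree_X_sub_C]; exact one_ne_zero
    rw [leadingCoeff_mul, leadingCoeff_mul, leadingCoeff_mul, leadingCoeff_mul,
        leadingCoeff_C, leadingCoeff_C, hamonic.leadingCoeff, hdmonic.leadingCoeff,
        leadingCoeff_comp hXs, (monic_X_sub_C η).leadingCoeff] at hlc
    simp only [one_pow, mul_one, one_mul] at hlc
    exact hk12 (mul_right_cancel₀ (leadingCoeff_ne_zero.mpr hW) hlc)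
  have h := sub_eq_zero.mp hW0
  exact aux_eq_of_wronskian hη hPmonic hQmonic h
end
end

section
/- (Discrete system from the quantum spectral curve; necessity part of Theorem 5.1.) Let t, Q ∈ ℂ[X] satisfy the quantum spectral curve equation (no genericity assumption needed). Then for every n ∈ {1,…,N}, the vector v ∈ ℂ^{d_n+1} defined by v_h := Q(ζ_{n,h}), h ∈ {0,…,d_n}, lies in the kernel of the matrix D_{t,n}, i.e. D_{t,n}·v = 0. Consequently, if Q(ζ_{n,h}) ≠ 0 for at least one h ∈ {0,…,d_n}, then det D_{t,n} = 0. -/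
open Polynomial Finset

noncomputable section

/-- Sum of a "tridiagonal row" over `range (m+1)`. -/
lemma tridiag_sum (m hv : ℕ) (hhv : hv ≤ m) (T A Dd : ℂ) :
    (∑ j ∈ Finset.range (m+1),
      if j = hv then T else if j = hv+1 then A else if hv = j+1 then Dd else 0)
    = T + (if hv < m then A else 0) + (if 0 < hv then Dd else 0) := by
  have hpt : ∀ j, (if j = hv then T else if j = hv+1 then A else if hv = j+1 then Dd else 0)
      = (if j = hv then T else 0) + (if j = hv+1 then A else 0)
        + (if j = hv - 1 then (if 0 < hv then Dd else 0) else 0) := by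
    intro j
    split_ifs <;> first | ring1 | (exfalso; omega)
  rw [Finset.sum_congr rfl (fun j _ => hpt j), Finset.sum_add_distrib,
    Finset.sum_add_distrib, Finset.sum_ite_eq', Finset.sum_ite_eq', Finset.sum_ite_eq']
  have h1 : hv ∈ Finset.range (m+1) := Finset.mem_range.2 (by omega)
  have h2 : hv - 1 ∈ Finset.range (m+1) := Finset.mem_range.2 (by omega)
  have h3 : (hv + 1 ∈ Finset.range (m+1)) ↔ hv < m := by
    rw [Finset.mem_range]; omega
  simp only [if_pos h1, if_pos h2]
  by_cases h : hv < m
  · rw [if_pos (h3.2 h), if_pos h]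
  · rw [if_neg (fun hc => h (h3.1 hc)), if_neg h]

/-- Discrete system from the quantum spectral curve: the vector of values of `Q`
at the points `ζ_{n,h}` lies in the kernel of `D_{t,n}`; hence `det D_{t,n} = 0`
as soon as one of these values is nonzero. -/
theorem statement2 {N : ℕ} (hN : 1 ≤ N) (d : Fin N → ℕ) (hd : ∀ n, 1 ≤ d n)
    (ξ : Fin N → ℂ) (η k1 k2 : ℂ)
    (t Q : Polynomial ℂ)
    (hTQ : t * Q = C k1 * apol d ξ η * Q.comp (X - C η)
      + C k2 * dpol d ξ η * Q.comp (X + C η)) :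
    ∀ n : Fin N,
      (Dmat d ξ η k1 k2 t n).mulVec (fun h : Fin (d n + 1) => Q.eval (zeta d ξ η n h)) = 0 ∧
      ((∃ h : Fin (d n + 1), Q.eval (zeta d ξ η n h) ≠ 0) →
        (Dmat d ξ η k1 k2 t n).det = 0) := by
  intro n
  classical
  have key : ∀ x : ℂ, t.eval x * Q.eval x
      = k1 * (apol d ξ η).eval x * Q.eval (x - η)
        + k2 * (dpol d ξ η).eval x * Q.eval (x + η) := by
    intro x
    have := congrArg (Polynomial.eval x) hTQ
    simpa [eval_comp, mul_assoc] using this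
  have zsucc : ∀ k : ℕ, zeta d ξ η n (k+1) = zeta d ξ η n k - η := by
    intro k; simp only [zeta]; push_cast; ring
  have aroot : (apol d ξ η).eval (zeta d ξ η n (d n)) = 0 := by
    rw [apol, eval_prod]
    exact Finset.prod_eq_zero (Finset.mem_univ n) (by simp)
  have droot : (dpol d ξ η).eval (zeta d ξ η n 0) = 0 := by
    rw [dpol, eval_prod]
    exact Finset.prod_eq_zero (Finset.mem_univ n) (by simp)
  have hker : (Dmat d ξ η k1 k2 t n).mulVec
      (fun h : Fin (d n + 1) => Q.eval (zeta d ξ η n h)) = 0 := by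
    funext h
    have hsum : (Dmat d ξ η k1 k2 t n).mulVec
        (fun j : Fin (d n + 1) => Q.eval (zeta d ξ η n j)) h
        = ∑ j ∈ Finset.range (d n + 1),
            (if j = (h : ℕ) then t.eval (zeta d ξ η n h) * Q.eval (zeta d ξ η n (h : ℕ))
             else if j = (h : ℕ) + 1 then
               (-k1 * (apol d ξ η).eval (zeta d ξ η n h)) * Q.eval (zeta d ξ η n ((h : ℕ)+1))
             else if (h : ℕ) = j + 1 then
               (-k2 * (dpol d ξ η).eval (zeta d ξ η n h)) * Q.eval (zeta d ξ η n ((h : ℕ)-1))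
             else 0) := by
      rw [Matrix.mulVec, dotProduct,
        ← Fin.sum_univ_eq_sum_range (fun j =>
            (if j = (h : ℕ) then t.eval (zeta d ξ η n h) * Q.eval (zeta d ξ η n (h : ℕ))
             else if j = (h : ℕ) + 1 then
               (-k1 * (apol d ξ η).eval (zeta d ξ η n h)) * Q.eval (zeta d ξ η n ((h : ℕ)+1))
             else if (h : ℕ) = j + 1 then
               (-k2 * (dpol d ξ η).eval (zeta d ξ η n h)) * Q.eval (zeta d ξ η n ((h : ℕ)-1))
             else 0)) (d n + 1)]
      refine Finset.sum_congr rfl (fun j _ => ?_)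
      simp only [Dmat, Matrix.of_apply]
      split_ifs with h1 h2 h3
      · rw [h1]
      · rw [show zeta d ξ η n (j : ℕ) = zeta d ξ η n ((h : ℕ)+1) by rw [h2]]
      · rw [show zeta d ξ η n (j : ℕ) = zeta d ξ η n ((h : ℕ)-1) by
          congr 1; omega]
      · exact zero_mul _
    simp only [Pi.zero_apply]
    rw [hsum, tridiag_sum (d n) (h : ℕ) (by omega)]
    by_cases h0 : 0 < (h : ℕ)
    · have hz1 : zeta d ξ η n (h : ℕ) + η = zeta d ξ η n ((h : ℕ) - 1) := by
        have := zsucc ((h : ℕ) - 1)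
        rw [show (h : ℕ) - 1 + 1 = (h : ℕ) by omega] at this
        rw [this]; ring
      by_cases hm : (h : ℕ) < d n
      · rw [if_pos hm, if_pos h0, zsucc (h : ℕ), ← hz1]
        linear_combination key (zeta d ξ η n (h : ℕ))
      · have hdn : (h : ℕ) = d n := by omega
        rw [hdn] at hz1
        rw [if_neg hm, if_pos h0, hdn, ← hz1]
        have hkey2 := key (zeta d ξ η n (d n))
        rw [aroot] at hkey2
        linear_combination hkey2
    · have hz0 : (h : ℕ) = 0 := by omega
      have hm : (h : ℕ) < d n := by have := hd n; omega
      rw [if_pos hm, if_neg h0, hz0, zsucc 0]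
      have hkey2 := key (zeta d ξ η n 0)
      rw [droot] at hkey2
      linear_combination hkey2
  refine ⟨hker, fun ⟨h, hh⟩ => ?_⟩
  rw [← Matrix.exists_mulVec_eq_zero_iff]
  refine ⟨fun j : Fin (d n + 1) => Q.eval (zeta d ξ η n j), ?_, hker⟩
  intro hc
  exact hh (congrFun hc h)
end
end

section
/- (Vanishing of the quantum Wronskian, key lemma in the proof of Theorem 5.1.) Assume η ≠ 0, k1 ≠ 0, k2 ≠ 0, k1 ≠ k2 and the genericity condition. If W ∈ ℂ[X] satisfies the polynomial identity k1·a(X)·W(X) = k2·d(X)·W(X+η), where W(X+η) denotes composition of W with X+η, then W = 0. -/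
open Polynomial Finset

noncomputable section

/-- Vanishing of the quantum Wronskian (key lemma in the proof of Theorem 5.1):
a polynomial `W` with `k1·a(X)·W(X) = k2·d(X)·W(X+η)` must vanish. -/
theorem statement3 {N : ℕ} (hN : 1 ≤ N) (d : Fin N → ℕ) (hd : ∀ n, 1 ≤ d n)
    (ξ : Fin N → ℂ) (η k1 k2 : ℂ)
    (hη : η ≠ 0) (hk1 : k1 ≠ 0) (hk2 : k2 ≠ 0) (hk12 : k1 ≠ k2)
    (hgen : ∀ n m : Fin N, ∀ k j : ℕ, k ≤ d n → j ≤ d m →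
      zeta d ξ η n k = zeta d ξ η m j → n = m ∧ k = j)
    (W : Polynomial ℂ)
    (hW : C k1 * apol d ξ η * W = C k2 * dpol d ξ η * W.comp (X + C η)) :
    W = 0 := by
  by_contra hW0
  have ha : (apol d ξ η).Monic := monic_prod_of_monic _ _ (fun n _ => monic_X_sub_C _)
  have hdd : (dpol d ξ η).Monic := monic_prod_of_monic _ _ (fun n _ => monic_X_sub_C _)
  have hc := congrArg leadingCoeff hW
  have hq : (X + C η : Polynomial ℂ).natDegree ≠ 0 := by simp
  rw [leadingCoeff_mul, leadingCoeff_mul, leadingCoeff_mul, leadingCoeff_mul,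
    ha.leadingCoeff, hdd.leadingCoeff, leadingCoeff_comp hq] at hc
  simp only [leadingCoeff_C, mul_one] at hc
  have hx : (X + C η : Polynomial ℂ).leadingCoeff = 1 := monic_X_add_C η
  rw [hx, one_pow, mul_one] at hc
  exact hk12 (mul_right_cancel₀ (leadingCoeff_ne_zero.2 hW0) hc)
end
end

section
/- (Polynomials with shift-invariant ratio are proportional.) Let η ∈ ℂ with η ≠ 0, and let P, Q ∈ ℂ[X] be nonzero polynomials satisfying Q(X)·P(X−η) = P(X)·Q(X−η) as an identity in ℂ[X] (compositions with X−η). Then leadingCoeff(Q)·P = leadingCoeff(P)·Q; in particular P and Q are proportional, and if both are monic then P = Q. -/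
open Polynomial

/-- A nonzero complex polynomial invariant under a nonzero shift is constant. -/
lemma shift_inv_const (η : ℂ) (hη : η ≠ 0) (f : Polynomial ℂ) (hf : f ≠ 0)
    (hs : f.comp (X - C η) = f) : f.natDegree = 0 := by
  by_contra hd
  have hdeg : 0 < f.degree := by
    rwa [Polynomial.natDegree_pos_iff_degree_pos.symm, Nat.pos_iff_ne_zero]
  obtain ⟨r, hr⟩ := Complex.exists_root hdeg
  have key : ∀ n : ℕ, f.IsRoot (r + n * η) := by
    intro n
    induction n with
    | zero => simpa using hr
    | succ n ih =>
      have := congrArg (Polynomial.eval (r + (n + 1 : ℕ) * η)) hs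
      simp only [eval_comp, eval_sub, eval_X, eval_C] at this
      have h2 : r + ((n : ℕ) + 1 : ℕ) * η - η = r + n * η := by push_cast; ring
      rw [h2] at this
      unfold Polynomial.IsRoot
      rw [← this]
      exact ih
  have hinj : Function.Injective (fun n : ℕ => r + n * η) := by
    intro a b hab
    simp only [add_right_cancel_iff, add_right_inj] at hab
    have : (a : ℂ) = b := mul_right_cancel₀ hη hab
    exact_mod_cast this
  exact (Set.infinite_of_injective_forall_mem hinj
      (fun n => Set.mem_setOf.mpr (key n)))
    (Polynomial.finite_setOf_isRoot hf)

lemma comp_shift_ne_zero (η : ℂ) (f : Polynomial ℂ) (hf : f ≠ 0) :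
    f.comp (X - C η) ≠ 0 := by
  intro h0
  apply hf
  have : f.natDegree = (f.comp (X - C η)).natDegree := by
    rw [natDegree_comp]
    simp [natDegree_X_sub_C]
  by_contra hf'
  rw [h0] at this
  simp at this
  obtain ⟨c, hc⟩ := Polynomial.natDegree_eq_zero.mp this
  rw [← hc] at h0 hf'
  simp at h0
  simp [h0] at hf'

/-- Polynomials with shift-invariant ratio are proportional:
if `Q(X)·P(X−η) = P(X)·Q(X−η)` with `η ≠ 0` and `P, Q ≠ 0`, then
`lc(Q)·P = lc(P)·Q`; in particular two monic such polynomials coincide. -/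
theorem statement5 (η : ℂ) (hη : η ≠ 0) (P Q : Polynomial ℂ)
    (hP : P ≠ 0) (hQ : Q ≠ 0)
    (h : Q * P.comp (X - C η) = P * Q.comp (X - C η)) :
    C Q.leadingCoeff * P = C P.leadingCoeff * Q ∧
      (P.Monic → Q.Monic → P = Q) := by
  set g := GCDMonoid.gcd P Q with hg
  have hgP : g ∣ P := gcd_dvd_left P Q
  have hgQ : g ∣ Q := gcd_dvd_right P Q
  have hg0 : g ≠ 0 := gcd_ne_zero_of_right hQ
  set p := P / g with hp
  set q := Q / g with hq
  have hPg : g * p = P := EuclideanDomain.mul_div_cancel' hg0 hgP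
  have hQg : g * q = Q := EuclideanDomain.mul_div_cancel' hg0 hgQ
  have hp0 : p ≠ 0 := by intro h0; rw [h0, mul_zero] at hPg; exact hP hPg.symm
  have hq0 : q ≠ 0 := by intro h0; rw [h0, mul_zero] at hQg; exact hQ hQg.symm
  have hcop : IsCoprime p q := isCoprime_div_gcd_div_gcd hQ
  -- cancel g and g.comp from h
  have hcomp0 : g.comp (X - C η) ≠ 0 := comp_shift_ne_zero η g hg0
  have h2 : q * p.comp (X - C η) = p * q.comp (X - C η) := by
    have := h
    rw [← hPg, ← hQg, mul_comp, mul_comp] at this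
    have h3 : (g * g.comp (X - C η)) * (q * p.comp (X - C η))
        = (g * g.comp (X - C η)) * (p * q.comp (X - C η)) := by ring_nf; ring_nf at this; linear_combination this
    exact mul_left_cancel₀ (mul_ne_zero hg0 hcomp0) h3
  -- p divides p.comp
  have hdvd : p ∣ p.comp (X - C η) :=
    hcop.dvd_of_dvd_mul_left ⟨q.comp (X - C η), h2⟩
  obtain ⟨u, hu⟩ := hdvd
  have hdegu : u.natDegree = 0 := by
    have := natDegree_comp (p := p) (q := X - C η)
    rw [hu, natDegree_mul hp0 (by rintro rfl; simp at hu; exact comp_shift_ne_zero η p hp0 hu)] at this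
    simp [natDegree_X_sub_C] at this
    omega
  obtain ⟨c, hc⟩ := Polynomial.natDegree_eq_zero.mp hdegu
  have hlc : p.comp (X - C η) = p := by
    have hlead : (p.comp (X - C η)).leadingCoeff = p.leadingCoeff := by
      rw [leadingCoeff_comp (by simp [natDegree_X_sub_C])]
      simp [leadingCoeff_X_sub_C]
    rw [hu, ← hc] at hlead ⊢
    rw [leadingCoeff_mul, leadingCoeff_C] at hlead
    have : c = 1 := by
      have := mul_left_cancel₀ (leadingCoeff_ne_zero.mpr hp0)
        (by rw [hlead, mul_one] : p.leadingCoeff * c = p.leadingCoeff * 1)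
      exact this
    simp [this]
  have hpdeg : p.natDegree = 0 := shift_inv_const η hη p hp0 hlc
  -- similarly q
  have hdvdq : q ∣ q.comp (X - C η) :=
    hcop.symm.dvd_of_dvd_mul_left ⟨p.comp (X - C η), h2.symm⟩
  obtain ⟨v, hv⟩ := hdvdq
  have hdegv : v.natDegree = 0 := by
    have := natDegree_comp (p := q) (q := X - C η)
    rw [hv, natDegree_mul hq0 (by rintro rfl; simp at hv; exact comp_shift_ne_zero η q hq0 hv)] at this
    simp [natDegree_X_sub_C] at this
    omega
  obtain ⟨d, hd⟩ := Polynomial.natDegree_eq_zero.mp hdegv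
  have hlcq : q.comp (X - C η) = q := by
    have hlead : (q.comp (X - C η)).leadingCoeff = q.leadingCoeff := by
      rw [leadingCoeff_comp (by simp [natDegree_X_sub_C])]
      simp [leadingCoeff_X_sub_C]
    rw [hv, ← hd] at hlead ⊢
    rw [leadingCoeff_mul, leadingCoeff_C] at hlead
    have : d = 1 := mul_left_cancel₀ (leadingCoeff_ne_zero.mpr hq0)
        (by rw [hlead, mul_one] : q.leadingCoeff * d = q.leadingCoeff * 1)
    simp [this]
  have hqdeg : q.natDegree = 0 := shift_inv_const η hη q hq0 hlcq
  obtain ⟨a, ha⟩ := Polynomial.natDegree_eq_zero.mp hpdeg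
  obtain ⟨b, hb⟩ := Polynomial.natDegree_eq_zero.mp hqdeg
  have key : C Q.leadingCoeff * P = C P.leadingCoeff * Q := by
    rw [← hPg, ← hQg, ← ha, ← hb]
    rw [leadingCoeff_mul, leadingCoeff_mul, leadingCoeff_C, leadingCoeff_C]
    rw [C_mul, C_mul]
    ring
  refine ⟨key, fun hPm hQm => ?_⟩
  rw [hPm.leadingCoeff, hQm.leadingCoeff] at key
  simpa using key
end

section
/- (Solution of the backward recursion by fused transfer matrix eigenvalues, equation (5.19) of the paper.) Fix a site with m := d_n ≥ 1 and write ζ_k := ζ_{n,k} for k ∈ {0,…,m}, so that ζ_{m−k} = ζ_m + k·η. Let k1, k2 ∈ ℂ with k2 ≠ 0, let t : ℂ → ℂ be any function, and define the fused sequence t^{(l)} : ℂ → ℂ by t^{(0)} = 1, t^{(1)} = t, and t^{(l+1)}(x) = t(x + lη)·t^{(l)}(x) − k1·k2·a(x + lη)·d(x + (l−1)η)·t^{(l−1)}(x) for l ≥ 1. Assume d(ζ_k) ≠ 0 for all k ∈ {1,…,m}. Define q_{m+1} := 0, q_m := 1, and, downward for h = m, m−1, …, 1, q_{h−1} := (t(ζ_h)·q_h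 − k1·a(ζ_h)·q_{h+1}) / (k2·d(ζ_h)). Then for every h ∈ {0,…,m}: q_{m−h} = t^{(h)}(ζ_m) / (k2^h·∏_{k=0}^{h−1} d(ζ_m + kη)). -/
open Finset

noncomputable section

/-- `a(x) = ∏ₙ (x − ζ_{n,dₙ})` as a function on `ℂ`. -/
def afun {N : ℕ} (d : Fin N → ℕ) (ξ : Fin N → ℂ) (η : ℂ) (x : ℂ) : ℂ :=
  ∏ n : Fin N, (x - zeta d ξ η n (d n))

/-- `d(x) = ∏ₙ (x − ζ_{n,0})` as a function on `ℂ`. -/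
def dfun {N : ℕ} (d : Fin N → ℕ) (ξ : Fin N → ℂ) (η : ℂ) (x : ℂ) : ℂ :=
  ∏ n : Fin N, (x - zeta d ξ η n 0)

private lemma aux_div (k1 k2 P Db Dc Ac u v w : ℂ) (hk2 : k2 ≠ 0) (hP : P ≠ 0)
    (hDb : Db ≠ 0) (hDc : Dc ≠ 0) (j : ℕ) :
    (u * (v / (k2 ^ (j+1) * (P * Db))) - k1 * Ac * (w / (k2 ^ j * P))) / (k2 * Dc)
      = (u * v - k1 * k2 * Ac * Db * w) / (k2 ^ (j+2) * (P * Db * Dc)) := by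
  have hD1 : k2 ^ (j+1) * (P * Db) ≠ 0 :=
    mul_ne_zero (pow_ne_zero _ hk2) (mul_ne_zero hP hDb)
  have hD2 : k2 ^ j * P ≠ 0 := mul_ne_zero (pow_ne_zero _ hk2) hP
  have hD3 : k2 ^ (j+2) * (P * Db * Dc) ≠ 0 :=
    mul_ne_zero (pow_ne_zero _ hk2) (mul_ne_zero (mul_ne_zero hP hDb) hDc)
  rw [div_eq_div_iff (mul_ne_zero hk2 hDc) hD3, sub_mul, sub_mul]
  congr 1
  · rw [← mul_div_assoc, div_mul_eq_mul_div, div_eq_iff hD1]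
    ring
  · rw [← mul_div_assoc, div_mul_eq_mul_div, div_eq_iff hD2]
    ring

/-- Solution of the backward recursion by fused transfer matrix eigenvalues
(equation (5.19) of the paper): at a site `n` with `m = dₙ`, the values produced
by the backward substitution from the tridiagonal system are
`q_{m−h} = t^{(h)}(ζ_m) / (k2^h·∏_{k<h} d(ζ_m + kη))`. -/
theorem statement11 {N : ℕ} (hN : 1 ≤ N) (d : Fin N → ℕ) (hd : ∀ n, 1 ≤ d n)
    (ξ : Fin N → ℂ) (η k1 k2 : ℂ) (hk2 : k2 ≠ 0)
    (n : Fin N)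
    (hdnz : ∀ k : ℕ, 1 ≤ k → k ≤ d n → dfun d ξ η (zeta d ξ η n k) ≠ 0)
    (t : ℂ → ℂ) (tf : ℕ → ℂ → ℂ)
    (htf0 : ∀ x, tf 0 x = 1) (htf1 : ∀ x, tf 1 x = t x)
    (htfr : ∀ l : ℕ, 1 ≤ l → ∀ x : ℂ,
      tf (l + 1) x = t (x + (l : ℂ) * η) * tf l x
        - k1 * k2 * afun d ξ η (x + (l : ℂ) * η)
          * dfun d ξ η (x + ((l : ℂ) - 1) * η) * tf (l - 1) x)
    (q : ℕ → ℂ)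
    (hqtop : q (d n + 1) = 0) (hqm : q (d n) = 1)
    (hqr : ∀ h : ℕ, 1 ≤ h → h ≤ d n →
      q (h - 1) = (t (zeta d ξ η n h) * q h
          - k1 * afun d ξ η (zeta d ξ η n h) * q (h + 1))
        / (k2 * dfun d ξ η (zeta d ξ η n h))) :
    ∀ h : ℕ, h ≤ d n →
      q (d n - h) = tf h (zeta d ξ η n (d n))
        / (k2 ^ h * ∏ k ∈ Finset.range h, dfun d ξ η (zeta d ξ η n (d n) + (k : ℂ) * η)) := by
  have hZshift : ∀ k : ℕ, k ≤ d n →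
      zeta d ξ η n (d n) + (k : ℂ) * η = zeta d ξ η n (d n - k) := by
    intro k hk
    simp only [zeta]
    have : ((d n - k : ℕ) : ℂ) = (d n : ℂ) - (k : ℂ) := by
      push_cast [Nat.cast_sub hk]; ring
    rw [this]; ring
  have hDnz : ∀ k : ℕ, k < d n → dfun d ξ η (zeta d ξ η n (d n) + (k : ℂ) * η) ≠ 0 := by
    intro k hk
    rw [hZshift k hk.le]
    exact hdnz (d n - k) (by omega) (by omega)
  intro h
  induction h using Nat.strong_induction_on with
  | _ h ih =>
    match h with
    | 0 =>
      intro _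
      simp [htf0, hqm]
    | 1 =>
      intro hh
      rw [hqr (d n) (hd n) le_rfl, hqm, hqtop, htf1]
      simp only [Finset.prod_range_one, Nat.cast_zero, zero_mul, add_zero, pow_one,
        mul_one, mul_zero, sub_zero]
    | (j+2) =>
      intro hh
      have h1 : (1:ℕ) ≤ d n - (j+1) := by omega
      have h2 : d n - (j+1) ≤ d n := by omega
      have e1 : d n - (j+2) = (d n - (j+1)) - 1 := by omega
      have e2 : d n - (j+1) + 1 = d n - j := by omega
      have IH1 := ih (j+1) (by omega) (by omega)
      have IH2 := ih j (by omega) (by omega)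
      have hc : zeta d ξ η n (d n - (j+1)) = zeta d ξ η n (d n) + ((j:ℂ)+1) * η := by
        rw [← hZshift (j+1) (by omega)]; push_cast; ring
      have hrec := hqr (d n - (j+1)) h1 h2
      rw [e2, hc] at hrec
      rw [e1, hrec, IH1, IH2]
      have htf := htfr (j+1) (by omega) (zeta d ξ η n (d n))
      have ej : ((j:ℂ)+1) - 1 = (j:ℂ) := by ring
      have ejc : ((j+1:ℕ):ℂ) = (j:ℂ) + 1 := by push_cast; ring
      rw [ejc, ej] at htf
      simp only [Nat.add_sub_cancel] at htf
      rw [show j+1+1 = j+2 from rfl] at htf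
      rw [htf]
      simp only [Finset.prod_range_succ, ejc]
      have hDc : dfun d ξ η (zeta d ξ η n (d n) + ((j:ℂ)+1) * η) ≠ 0 := by
        have := hDnz (j+1) (by omega); rwa [ejc] at this
      have hDb : dfun d ξ η (zeta d ξ η n (d n) + (j:ℂ) * η) ≠ 0 :=
        hDnz j (by omega)
      have hP : (∏ k ∈ Finset.range j, dfun d ξ η (zeta d ξ η n (d n) + (k : ℂ) * η)) ≠ 0 := by
        rw [Finset.prod_ne_zero_iff]
        intro k hk
        exact hDnz k (by simp at hk; omega)
      set P := ∏ k ∈ Finset.range j, dfun d ξ η (zeta d ξ η n (d n) + (k : ℂ) * η) with hPdef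
      set Db := dfun d ξ η (zeta d ξ η n (d n) + (j : ℂ) * η) with hDbdef
      set Dc := dfun d ξ η (zeta d ξ η n (d n) + ((j : ℂ) + 1) * η) with hDcdef
      set Ac := afun d ξ η (zeta d ξ η n (d n) + ((j : ℂ) + 1) * η) with hAcdef
      set u := t (zeta d ξ η n (d n) + ((j : ℂ) + 1) * η) with hudef
      set v := tf (j + 1) (zeta d ξ η n (d n)) with hvdef
      set w := tf j (zeta d ξ η n (d n)) with hwdef
      exact aux_div k1 k2 P Db Dc Ac u v w hk2 hP hDb hDc j
end
end
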